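/- arXiv:math/0703411 — 2 statements merged into one kernel-verified Lean document; each statement's English description precedes it below -/
import Mathlib

section
/- Let G be a group acting on a set X, let ℓ : X → ℕ and h : X → A (A an additive abelian group) be G-invariant functions, and let Y ⊆ X be a G-invariant subset. Suppose σ : X → X is a G-equivariant involution such that σ(x) = x if and only if x ∈ Y, and for every x ∉ Y one has h(σ(x)) = h(x) and ℓ(σ(x)) = ℓ(x) + 1 or ℓ(σ(x)) + 1 = ℓ(x). If X has only finitely many G-orbits, then the sum over a set of G-orbit representatives x of X of (−1)^{ℓ(x)} h(x) equals the sum over a set of G-orbit representatives y of Y of (−1)^{ℓ(y)} h(y). -/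
/-!
The sum over orbit representatives of a `G`-invariant function does not depend on the choice
of representatives. On the orbits outside `Y`, `σ` induces an involution without fixed points
(an orbit cannot be sent to itself, since `ℓ` is constant on it while `σ` changes `ℓ` by one),
and paired orbits contribute opposite terms; so only the orbits in `Y` survive.
-/

open MulAction

section OrbitReps

variable {G X M : Type*} [Group G] [MulAction G X]

theorem apply_eq_of_mem_orbit {f : X → M} (hf : ∀ (g : G) (x : X), f (g • x) = f x)
    {x y : X} (hxy : x ∈ orbit G y) : f x = f y := by
  obtain ⟨g, rfl⟩ := hxy
  exact hf g y

theorem mem_of_mem_orbit {S : Set X} (hS : ∀ (g : G) (x : X), x ∈ S → g • x ∈ S)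
    {x y : X} (hxy : x ∈ orbit G y) (hy : y ∈ S) : x ∈ S := by
  obtain ⟨g, rfl⟩ := hxy
  exact hS g y hy

theorem smul_notMem_of_notMem {S : Set X} (hS : ∀ (g : G) (x : X), x ∈ S → g • x ∈ S)
    (g : G) {x : X} (hx : x ∉ S) : g • x ∉ S := fun hgx =>
  hx (by simpa using hS g⁻¹ _ hgx)

theorem existsUnique_mem_filter_of_orbit_reps {S : Set X}
    (hS : ∀ (g : G) (x : X), x ∈ S → g • x ∈ S) {R : Finset X}
    (hR : ∀ x : X, ∃! r, r ∈ R ∧ r ∈ orbit G x) [DecidablePred (· ∈ S)]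
    {x : X} (hx : x ∈ S) :
    ∃! r, r ∈ R.filter (· ∈ S) ∧ r ∈ orbit G x := by
  obtain ⟨r, ⟨hrR, hrx⟩, hr_unique⟩ := hR x
  refine ⟨r, ⟨Finset.mem_filter.2 ⟨hrR, mem_of_mem_orbit hS hrx hx⟩, hrx⟩, ?_⟩
  rintro r' ⟨hr', hr'x⟩
  exact hr_unique r' ⟨(Finset.mem_filter.1 hr').1, hr'x⟩

theorem sum_eq_sum_of_orbit_reps [AddCommMonoid M] {f : X → M}
    (hf : ∀ (g : G) (x : X), f (g • x) = f x) {S : Set X} {R R' : Finset X}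
    (hRS : ∀ r ∈ R, r ∈ S) (hR : ∀ x ∈ S, ∃! r, r ∈ R ∧ r ∈ orbit G x)
    (hR'S : ∀ r ∈ R', r ∈ S) (hR' : ∀ x ∈ S, ∃! r, r ∈ R' ∧ r ∈ orbit G x) :
    ∑ r ∈ R, f r = ∑ r ∈ R', f r := by
  choose i hi hi_unique using hR'
  choose j hj hj_unique using hR
  refine Finset.sum_bij' (fun r hr => i r (hRS r hr)) (fun r hr => j r (hR'S r hr))
    (fun r hr => (hi r _).1) (fun r hr => (hj r _).1) ?_ ?_ ?_
  · intro r hr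
    exact (hj_unique _ _ r ⟨hr, mem_orbit_symm.1 (hi r _).2⟩).symm
  · intro r hr
    exact (hi_unique _ _ r ⟨hr, mem_orbit_symm.1 (hj r _).2⟩).symm
  · intro r hr
    exact (apply_eq_of_mem_orbit hf (hi r _).2).symm

theorem sum_orbit_reps_eq_zero_of_involution [AddCommGroup M] {f : X → M}
    (hf : ∀ (g : G) (x : X), f (g • x) = f x) {T : Set X} {R : Finset X}
    (hRT : ∀ r ∈ R, r ∈ T) (hR : ∀ x ∈ T, ∃! r, r ∈ R ∧ r ∈ orbit G x)
    {σ : X → X} (hσT : ∀ x ∈ T, σ x ∈ T) (hinvol : ∀ x, σ (σ x) = x)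
    (hequiv : ∀ (g : G) (x : X), σ (g • x) = g • σ x)
    (hneg : ∀ x ∈ T, f (σ x) = -f x) (hfree : ∀ x ∈ T, σ x ∉ orbit G x) :
    ∑ r ∈ R, f r = 0 := by
  choose τ hτ hτ_unique using fun x (hx : x ∈ T) => hR (σ x) (hσT x hx)
  refine Finset.sum_involution (fun r hr => τ r (hRT r hr)) ?_ ?_
    (fun r hr => (hτ r _).1) ?_
  · intro r hr
    rw [apply_eq_of_mem_orbit hf (hτ r _).2, hneg r (hRT r hr), add_neg_cancel]
  · intro r hr _ hτr
    have hr_orbit := (hτ r (hRT r hr)).2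
    rw [hτr, mem_orbit_symm] at hr_orbit
    exact hfree r (hRT r hr) hr_orbit
  · intro r hr
    obtain ⟨g, hg⟩ := (hτ r (hRT r hr)).2
    have hστ : σ (τ r (hRT r hr)) = g • r := by rw [← hg, hequiv, hinvol]
    refine (hτ_unique _ _ r ⟨hr, ?_⟩).symm
    rw [hστ]
    exact mem_orbit_smul g r

end OrbitReps

theorem neg_one_pow_smul_eq_neg_of_adjacent {A : Type*} [AddCommGroup A] {m n : ℕ}
    (hmn : m = n + 1 ∨ m + 1 = n) (a : A) : (-1 : ℤ) ^ m • a = -((-1 : ℤ) ^ n • a) := by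
  rcases hmn with rfl | rfl <;> simp [pow_succ]

/-- Let `G` be a group acting on a set `X`, let `ℓ : X → ℕ` and `h : X → A` (`A` an
additive abelian group) be `G`-invariant functions, and let `Y ⊆ X` be a `G`-invariant
subset.  Suppose `σ : X → X` is a `G`-equivariant involution whose fixed-point set is
exactly `Y`, and such that for every `x ∉ Y` one has `h (σ x) = h x` and
`ℓ (σ x) = ℓ x + 1` or `ℓ (σ x) + 1 = ℓ x`.  If `X` has only finitely many `G`-orbits
(encoded by a finite set `R` of orbit representatives for `X`, with `R'` a finite set
of orbit representatives for `Y`), then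
`∑_{x ∈ R} (−1)^{ℓ x} h x = ∑_{y ∈ R'} (−1)^{ℓ y} h y`. -/
theorem alternating_sum_orbitRep_eq_of_involution {G X A : Type*} [Group G] [MulAction G X]
    [AddCommGroup A] (ℓ : X → ℕ) (h : X → A)
    (hℓ : ∀ (g : G) (x : X), ℓ (g • x) = ℓ x)
    (hh : ∀ (g : G) (x : X), h (g • x) = h x)
    (Y : Set X) (hY : ∀ (g : G) (x : X), x ∈ Y → g • x ∈ Y)
    (σ : X → X)
    (hinvol : ∀ x, σ (σ x) = x)
    (hequiv : ∀ (g : G) (x : X), σ (g • x) = g • σ x)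
    (hfix : ∀ x, σ x = x ↔ x ∈ Y)
    (hout : ∀ x ∉ Y, h (σ x) = h x ∧ (ℓ (σ x) = ℓ x + 1 ∨ ℓ (σ x) + 1 = ℓ x))
    (R R' : Finset X)
    (hR : ∀ x : X, ∃! r, r ∈ R ∧ r ∈ MulAction.orbit G x)
    (hR'Y : ∀ r ∈ R', r ∈ Y)
    (hR' : ∀ y ∈ Y, ∃! r, r ∈ R' ∧ r ∈ MulAction.orbit G y) :
    ∑ x ∈ R, (-1 : ℤ) ^ ℓ x • h x = ∑ y ∈ R', (-1 : ℤ) ^ ℓ y • h y := by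
  classical
  set f : X → A := fun x => (-1 : ℤ) ^ ℓ x • h x
  have hf : ∀ (g : G) (x : X), f (g • x) = f x := fun g x => by simp only [f, hℓ, hh]
  have hYc : ∀ (g : G) (x : X), x ∈ Yᶜ → g • x ∈ Yᶜ := fun g _ =>
    smul_notMem_of_notMem hY g
  have hσYc : ∀ x ∈ Yᶜ, σ x ∈ Yᶜ := fun x hx hσx =>
    hx <| (hfix x).1 <| by simpa only [hinvol, eq_comm] using (hfix (σ x)).2 hσx
  have hsign : ∀ x ∈ Yᶜ, f (σ x) = -f x := fun x hx => by
    simp only [f, (hout x hx).1, neg_one_pow_smul_eq_neg_of_adjacent (hout x hx).2]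
  have hσ_orbit : ∀ x ∈ Yᶜ, σ x ∉ orbit G x := fun x hx hσx => by
    have hℓσ := (hout x hx).2
    rw [apply_eq_of_mem_orbit hℓ hσx] at hℓσ
    omega
  have hsum_Y : ∑ x ∈ R.filter (· ∈ Y), f x = ∑ y ∈ R', f y :=
    sum_eq_sum_of_orbit_reps hf (fun r hr => (Finset.mem_filter.1 hr).2)
      (fun y hy => existsUnique_mem_filter_of_orbit_reps hY hR hy) hR'Y hR'
  have hsum_Yc : ∑ x ∈ R.filter (· ∉ Y), f x = 0 :=
    sum_orbit_reps_eq_zero_of_involution hf (fun r hr => (Finset.mem_filter.1 hr).2)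
      (fun x hx => existsUnique_mem_filter_of_orbit_reps hYc hR hx) hσYc hinvol hequiv
      hsign hσ_orbit
  rw [← Finset.sum_filter_add_sum_filter_not R (· ∈ Y), hsum_Y, hsum_Yc, add_zero]
end

section
/- Let S be a finite set, A an additive abelian group, and f : Finset S → A any function. Then the sum, over all nonempty finite chains c of subsets of S (i.e., finite families of subsets of S that are pairwise comparable under inclusion) whose largest member is S itself, of (−1)^{(card c) − 1} f(min c), equals ∑_{I ⊆ S} (−1)^{card(S \ I)} f(I), where min c denotes the smallest member of the chain c. -/
open scoped Classical

open Finset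

private lemma chain_inf_mem' {S : Type*} [Fintype S] (c : Finset (Finset S))
    (hc : IsChain (· ⊆ ·) (↑c : Set (Finset S))) (hne : c.Nonempty) :
    c.inf id ∈ c := by
  obtain ⟨m, hm, hmin⟩ := Finset.exists_minimal hne
  have hle : ∀ x ∈ c, m ⊆ x := by
    intro x hx
    rcases eq_or_ne x m with rfl | hne'
    · exact Finset.Subset.refl _
    · rcases hc hx hm hne' with h | h
      · exact absurd (Finset.Subset.antisymm h (hmin hx h)) hne'
      · exact h
  have : c.inf id = m := le_antisymm (Finset.inf_le hm) (Finset.le_inf hle)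
  rw [this]; exact hm

private lemma inf_subset_of_mem' {S : Type*} [Fintype S] {c : Finset (Finset S)}
    {x : Finset S} (hx : x ∈ c) : c.inf id ⊆ x := by
  simpa using Finset.inf_le (f := (id : Finset S → Finset S)) hx

private lemma count_chains' {S : Type*} [Fintype S] (n : ℕ) :
    ∀ I : Finset S, (Finset.univ \ I).card = n →
    ∑ c ∈ Finset.univ.filter
        (fun c : Finset (Finset S) =>
          IsChain (· ⊆ ·) (↑c : Set (Finset S)) ∧ Finset.univ ∈ c ∧ c.inf id = I),
      (-1 : ℤ) ^ (c.card - 1) = (-1) ^ n := by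
  induction n using Nat.strong_induction_on with
  | _ n IH =>
  intro I hI
  rcases eq_or_ne I Finset.univ with rfl | hIne
  · -- I = univ : the only chain is {univ}
    have hn : n = 0 := by simp at hI; omega
    have hset : (Finset.univ.filter
        (fun c : Finset (Finset S) =>
          IsChain (· ⊆ ·) (↑c : Set (Finset S)) ∧ Finset.univ ∈ c ∧ c.inf id = Finset.univ))
        = {({Finset.univ} : Finset (Finset S))} := by
      ext c
      simp only [mem_filter, mem_univ, true_and, mem_singleton]
      constructor
      · rintro ⟨hc, huniv, hinf⟩
        ext x
        simp only [mem_singleton]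
        constructor
        · intro hx
          have hx2 : Finset.univ ⊆ x := by rw [← hinf]; exact inf_subset_of_mem' hx
          exact Finset.Subset.antisymm (Finset.subset_univ x) hx2
        · rintro rfl; exact huniv
      · rintro rfl
        refine ⟨?_, Finset.mem_singleton_self _, ?_⟩
        · simp [IsChain, Set.Pairwise]
        · simp
    rw [hset, hn, Finset.sum_singleton]
    simp
  · -- I ≠ univ
    have hnz : (Finset.univ \ I).Nonempty := by
      rw [Finset.sdiff_nonempty]
      exact fun h => hIne (Finset.univ_subset_iff.mp h)
    -- step 1 : bijection c ↦ c.erase I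
    have step1 :
        ∑ c ∈ Finset.univ.filter
            (fun c : Finset (Finset S) =>
              IsChain (· ⊆ ·) (↑c : Set (Finset S)) ∧ Finset.univ ∈ c ∧ c.inf id = I),
          (-1 : ℤ) ^ (c.card - 1)
        = ∑ c ∈ Finset.univ.filter
            (fun c : Finset (Finset S) =>
              IsChain (· ⊆ ·) (↑c : Set (Finset S)) ∧ Finset.univ ∈ c ∧ I ⊂ c.inf id),
          (-(-1 : ℤ) ^ (c.card - 1)) := by
      refine Finset.sum_nbij' (fun c => c.erase I) (fun c => insert I c) ?_ ?_ ?_ ?_ ?_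
      · intro c hc
        simp only [mem_filter, mem_univ, true_and] at hc ⊢
        obtain ⟨hch, hu, hinf⟩ := hc
        have hch' : IsChain (· ⊆ ·) (↑(c.erase I) : Set (Finset S)) :=
          hch.mono (Finset.coe_subset.mpr (Finset.erase_subset _ _))
        have humem : Finset.univ ∈ c.erase I :=
          Finset.mem_erase.mpr ⟨Ne.symm hIne, hu⟩
        have hmem := chain_inf_mem' _ hch' ⟨_, humem⟩
        have hIle : I ⊆ (c.erase I).inf id := by
          have hle : I ≤ (c.erase I).inf id :=
            Finset.le_inf (fun x hx => by
              have hs : I ⊆ x := by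
                rw [← hinf]
                exact inf_subset_of_mem' (Finset.mem_of_mem_erase hx)
              simpa using hs)
          exact hle
        refine ⟨hch', humem, hIle, fun h => ?_⟩
        exact (Finset.mem_erase.mp hmem).1 (Finset.Subset.antisymm h hIle)
      · intro c hc
        simp only [mem_filter, mem_univ, true_and] at hc ⊢
        obtain ⟨hch, hu, hlt⟩ := hc
        have hIx : ∀ x ∈ c, I ⊆ x := fun x hx => hlt.1.trans (inf_subset_of_mem' hx)
        refine ⟨?_, Finset.mem_insert_of_mem hu, ?_⟩
        · rw [Finset.coe_insert]
          exact hch.insert (fun b hb _ => Or.inl (hIx b hb))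
        · rw [Finset.inf_insert]
          simp only [id_eq]
          exact inf_eq_left.mpr hlt.1
      · intro c hc
        simp only [mem_filter, mem_univ, true_and] at hc
        have hIc : I ∈ c := by
          rw [← hc.2.2]; exact chain_inf_mem' c hc.1 ⟨_, hc.2.1⟩
        exact Finset.insert_erase hIc
      · intro c hc
        simp only [mem_filter, mem_univ, true_and] at hc
        have hInot : I ∉ c := fun h => hc.2.2.2 (inf_subset_of_mem' h)
        exact Finset.erase_insert hInot
      · intro c hc
        simp only [mem_filter, mem_univ, true_and] at hc
        have hIc : I ∈ c := by
          rw [← hc.2.2]; exact chain_inf_mem' c hc.1 ⟨_, hc.2.1⟩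
        have h2 : 2 ≤ c.card :=
          Finset.one_lt_card.mpr ⟨I, hIc, Finset.univ, hc.2.1, hIne⟩
        rw [Finset.card_erase_of_mem hIc]
        have h1 : c.card - 1 - 1 = c.card - 2 := by omega
        rw [h1]
        have hrw : c.card - 1 = (c.card - 2) + 1 := by omega
        rw [hrw, pow_succ]
        ring
    -- step 2 : split by the value of the min
    have step2 :
        ∑ c ∈ Finset.univ.filter
            (fun c : Finset (Finset S) =>
              IsChain (· ⊆ ·) (↑c : Set (Finset S)) ∧ Finset.univ ∈ c ∧ I ⊂ c.inf id),
          (-1 : ℤ) ^ (c.card - 1)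
        = ∑ J ∈ Finset.univ.filter (fun J : Finset S => I ⊂ J),
            ∑ c ∈ Finset.univ.filter
              (fun c : Finset (Finset S) =>
                IsChain (· ⊆ ·) (↑c : Set (Finset S)) ∧ Finset.univ ∈ c ∧ c.inf id = J),
            (-1 : ℤ) ^ (c.card - 1) := by
      rw [← Finset.sum_fiberwise_of_maps_to
        (t := Finset.univ.filter (fun J : Finset S => I ⊂ J))
        (g := fun c : Finset (Finset S) => c.inf id)
        (fun c hc => by
          simp only [mem_filter, mem_univ, true_and] at hc ⊢
          exact hc.2.2)]
      refine Finset.sum_congr rfl (fun J hJ => ?_)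
      simp only [mem_filter, mem_univ, true_and] at hJ
      refine Finset.sum_congr ?_ (fun _ _ => rfl)
      ext c
      simp only [mem_filter, mem_univ, true_and]
      constructor
      · rintro ⟨⟨h1, h2, _⟩, h4⟩
        exact ⟨h1, h2, h4⟩
      · rintro ⟨h1, h2, h3⟩
        exact ⟨⟨h1, h2, h3 ▸ hJ⟩, h3⟩
    -- cardinality bound for the induction hypothesis
    have hJlt : ∀ J : Finset S, I ⊂ J → (Finset.univ \ J).card < n := by
      intro J hJ
      have h1 := Finset.card_lt_card hJ
      have h2 : (Finset.univ \ J).card = Fintype.card S - J.card := by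
        rw [Finset.card_sdiff_of_subset (Finset.subset_univ _), Finset.card_univ]
      have h3 : (Finset.univ \ I).card = Fintype.card S - I.card := by
        rw [Finset.card_sdiff_of_subset (Finset.subset_univ _), Finset.card_univ]
      have h4 : J.card ≤ Fintype.card S := by
        have := Finset.card_le_card (Finset.subset_univ J)
        rwa [Finset.card_univ] at this
      omega
    have step3 :
        ∑ J ∈ Finset.univ.filter (fun J : Finset S => I ⊂ J),
            ∑ c ∈ Finset.univ.filter
              (fun c : Finset (Finset S) =>
                IsChain (· ⊆ ·) (↑c : Set (Finset S)) ∧ Finset.univ ∈ c ∧ c.inf id = J),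
            (-1 : ℤ) ^ (c.card - 1)
        = ∑ J ∈ Finset.univ.filter (fun J : Finset S => I ⊂ J),
            (-1 : ℤ) ^ (Finset.univ \ J).card := by
      refine Finset.sum_congr rfl (fun J hJ => ?_)
      simp only [mem_filter, mem_univ, true_and] at hJ
      exact IH _ (hJlt J hJ) J rfl
    -- binomial identity
    have hbin : ∑ J ∈ Finset.univ.filter (fun J : Finset S => I ⊆ J),
        (-1 : ℤ) ^ (Finset.univ \ J).card = 0 := by
      have := Finset.sum_nbij'
        (s := Finset.univ.filter (fun J : Finset S => I ⊆ J))
        (t := (Finset.univ \ I).powerset)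
        (f := fun J : Finset S => (-1 : ℤ) ^ (Finset.univ \ J).card)
        (g := fun K : Finset S => (-1 : ℤ) ^ K.card)
        (fun J => Finset.univ \ J) (fun K => Finset.univ \ K)
        (by
          intro J hJ
          simp only [mem_filter, mem_univ, true_and] at hJ
          rw [Finset.mem_powerset]
          exact Finset.sdiff_subset_sdiff (Finset.Subset.refl _) hJ)
        (by
          intro K hK
          rw [Finset.mem_powerset] at hK
          simp only [mem_filter, mem_univ, true_and]
          intro x hx
          rw [Finset.mem_sdiff]
          refine ⟨Finset.mem_univ _, fun hxK => ?_⟩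
          exact (Finset.mem_sdiff.mp (hK hxK)).2 hx)
        (by
          intro J _
          show Finset.univ \ (Finset.univ \ J) = J
          rw [Finset.sdiff_sdiff_self_left, Finset.univ_inter])
        (by
          intro K _
          show Finset.univ \ (Finset.univ \ K) = K
          rw [Finset.sdiff_sdiff_self_left, Finset.univ_inter])
        (fun _ _ => rfl)
      rw [this]
      exact Finset.sum_powerset_neg_one_pow_card_of_nonempty hnz
    have hsplit : Finset.univ.filter (fun J : Finset S => I ⊆ J)
        = insert I (Finset.univ.filter (fun J : Finset S => I ⊂ J)) := by
      ext J
      simp only [mem_filter, mem_univ, true_and, mem_insert]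
      constructor
      · intro h
        rcases eq_or_ne J I with rfl | hne
        · exact Or.inl rfl
        · exact Or.inr ⟨h, fun hs => hne (Finset.Subset.antisymm hs h)⟩
      · rintro (rfl | h)
        · exact Finset.Subset.refl _
        · exact h.1
    have hInot : I ∉ Finset.univ.filter (fun J : Finset S => I ⊂ J) := by
      simp only [mem_filter, mem_univ, true_and]
      exact fun h => h.2 h.1
    rw [hsplit, Finset.sum_insert hInot] at hbin
    rw [step1, Finset.sum_neg_distrib, step2, step3]
    rw [hI] at hbin
    linarith

/-- Let `S` be a finite set, `A` an additive abelian group and `f : Finset S → A` any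
function.  Then the sum, over all nonempty chains `c` of subsets of `S` (finite families
of subsets of `S` pairwise comparable under inclusion) whose largest member is `S`
itself, of `(−1)^{card c − 1} f (min c)` equals `∑_{I ⊆ S} (−1)^{card (S \ I)} f I`,
where `min c` (here `c.inf id`) is the smallest member of the chain `c`. -/
theorem sum_chains_top_eq_sum_subsets {S A : Type*} [Fintype S] [AddCommGroup A]
    (f : Finset S → A) :
    ∑ c ∈ Finset.univ.filter
        (fun c : Finset (Finset S) =>
          IsChain (· ⊆ ·) (↑c : Set (Finset S)) ∧ Finset.univ ∈ c),
      (-1 : ℤ) ^ (c.card - 1) • f (c.inf id)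
      = ∑ I : Finset S, (-1 : ℤ) ^ (Finset.univ \ I).card • f I := by
  rw [← Finset.sum_fiberwise_of_maps_to
    (t := (Finset.univ : Finset (Finset S)))
    (g := fun c : Finset (Finset S) => c.inf id)
    (fun c _ => Finset.mem_univ _)]
  refine Finset.sum_congr rfl (fun I _ => ?_)
  have hset : (Finset.univ.filter
      (fun c : Finset (Finset S) =>
        IsChain (· ⊆ ·) (↑c : Set (Finset S)) ∧ Finset.univ ∈ c)).filter
      (fun c => c.inf id = I)
      = Finset.univ.filter
        (fun c : Finset (Finset S) =>
          IsChain (· ⊆ ·) (↑c : Set (Finset S)) ∧ Finset.univ ∈ c ∧ c.inf id = I) := by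
    ext c
    simp only [mem_filter, mem_univ, true_and]
    tauto
  rw [hset]
  have hcongr : ∀ c ∈ Finset.univ.filter
      (fun c : Finset (Finset S) =>
        IsChain (· ⊆ ·) (↑c : Set (Finset S)) ∧ Finset.univ ∈ c ∧ c.inf id = I),
      (-1 : ℤ) ^ (c.card - 1) • f (c.inf id) = (-1 : ℤ) ^ (c.card - 1) • f I := by
    intro c hc
    simp only [mem_filter, mem_univ, true_and] at hc
    rw [hc.2.2]
  rw [Finset.sum_congr rfl hcongr, ← Finset.sum_smul, count_chains' _ I rfl]
end
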